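/- Consider the single-period mean field game in dimension 1 with δ = 1, dynamics X^α = ξ + k·tanh(α) + Z (k > 0) and cost J_m(α) := E[ |X^α − m̄|² + c α² ], where ξ and Z are independent square-integrable real random variables with E[Z] = 0 and m̄ := ∫x m(dx). Then: (1) any mean field equilibrium (α,m) satisfies |m̄ − E[ξ]| ≤ k; (2) for any m, letting m̄_k denote the projection of m̄ onto [E[ξ] − k, E[ξ] + k], the function φ(a) := E[ |ξ + tanh(a) + Z − m̄_k|² ] + (c/k)a² satisfies φ''(a) ≥ 2c/k − 2|m̄_k − E[ξ]| − 2 for all a ∈ ℝ; consequently, if c > k² + k, then φ is strictly convex and has a unique minimizer on ℝ. -/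

import Mathlib

open MeasureTheory ProbabilityTheory Filter Real
open scoped ENNReal NNReal BigOperators

noncomputable section

namespace Sigmoid1

variable {Ω : Type*} [MeasurableSpace Ω]

/-- Admissible controls: `σ(ξ)`-measurable square-integrable real random variables. -/
def Adm (P : Measure Ω) (ξ α : Ω → ℝ) : Prop :=
  Measurable[MeasurableSpace.comap ξ inferInstance] α ∧ MemLp α 2 P

/-- Controlled state `X^α = ξ + k tanh(α) + Z`. -/
def X (k : ℝ) (ξ Z α : Ω → ℝ) (ω : Ω) : ℝ := ξ ω + k * Real.tanh (α ω) + Z ω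

/-- Mean of a measure on `ℝ`. -/
def mean (m : Measure ℝ) : ℝ := ∫ x, x ∂m

/-- Cost `J_m(α) = E[ |X^α − m̄|² + c α² ]`. -/
def J (P : Measure Ω) (k c : ℝ) (ξ Z : Ω → ℝ) (m : Measure ℝ) (α : Ω → ℝ) : ℝ :=
  ∫ ω, ((X k ξ Z α ω - mean m) ^ 2 + c * α ω ^ 2) ∂P

/-- Mean field equilibrium of the single-period game with bounded drift. -/
def IsMFE (P : Measure Ω) (k c : ℝ) (ξ Z : Ω → ℝ) (α : Ω → ℝ) (m : Measure ℝ) : Prop :=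
  Adm P ξ α ∧ (∀ β, Adm P ξ β → J P k c ξ Z m α ≤ J P k c ξ Z m β) ∧
    P.map (X k ξ Z α) = m

/-- The projection of `m̄` onto `[E[ξ] − k, E[ξ] + k]`. -/
def proj (meanξ k mbar : ℝ) : ℝ := max (meanξ - k) (min (meanξ + k) mbar)

end Sigmoid1

/-!
Part (1): at an equilibrium `m̄ = E[X^α] = E[ξ] + k E[tanh α]` because `E[Z] = 0`, and
`|tanh| ≤ 1`. Part (2): with `W = ξ + Z − m̄_k` and `b = E[W] = E[ξ] − m̄_k`, the identity
`E[(W + t)²] = Var W + (b + t)²` gives `φ(a) = Var W + (b + tanh a)² + (c/k) a²`.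
Writing `t = tanh a`, so that `tanh' = 1 − t²`, one finds
`φ''(a) = 2(1 − t²)(1 − 3t² − 2bt) + 2c/k`, which is at least `2c/k − 2|b| − 2` since
`|2t(1 − t²)| ≤ 1` and `(1 − t²)(1 − 3t²) ≥ −1/3`. As `|b| ≤ k`, the condition `c > k² + k`
makes `φ'' > 0`; `φ` is moreover coercive, so it has exactly one minimizer.
-/

namespace Real

theorem hasDerivAt_tanh (x : ℝ) : HasDerivAt tanh (1 - tanh x ^ 2) x := by
  have h := (hasDerivAt_sinh x).div (hasDerivAt_cosh x) (cosh_pos x).ne'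
  rw [show sinh / cosh = tanh from funext fun y => (tanh_eq_sinh_div_cosh y).symm] at h
  refine h.congr_deriv ?_
  rw [tanh_eq_sinh_div_cosh, div_pow, one_sub_div (pow_pos (cosh_pos x) 2).ne']
  ring

@[fun_prop]
theorem continuous_tanh : Continuous tanh :=
  continuous_iff_continuousAt.2 fun x => (hasDerivAt_tanh x).continuousAt

end Real

lemma StrictConvexOn.existsUnique_forall_le {E : Type*} [TopologicalSpace E] [AddCommMonoid E]
    [Module ℝ E] [Nonempty E] {f : E → ℝ} (hf : StrictConvexOn ℝ Set.univ f)
    (hcont : Continuous f) (hlim : Tendsto f (cocompact E) atTop) :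
    ∃! x, ∀ y, f x ≤ f y :=
  let ⟨x, hx⟩ := hcont.exists_forall_le hlim
  ⟨x, hx, fun _ hy => hf.eq_of_isMinOn (fun z _ => hy z) (fun z _ => hx z) trivial trivial⟩

namespace Sigmoid1

section Expectation

variable {Ω : Type*} [MeasurableSpace Ω] {P : Measure Ω} [IsProbabilityMeasure P]

lemma abs_integral_tanh_le_one (α : Ω → ℝ) : |∫ ω, tanh (α ω) ∂P| ≤ 1 := by
  simpa using norm_integral_le_of_norm_le_const (μ := P) (C := 1)
    (ae_of_all _ fun ω => (norm_eq_abs (tanh (α ω))).trans_le (abs_tanh_lt_one (α ω)).le)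

lemma integral_X {k : ℝ} {ξ Z α : Ω → ℝ} (hξ : Integrable ξ P) (hZ : Integrable Z P)
    (hα : AEStronglyMeasurable α P) :
    ∫ ω, X k ξ Z α ω ∂P = (∫ ω, ξ ω ∂P) + k * (∫ ω, tanh (α ω) ∂P) + ∫ ω, Z ω ∂P := by
  have htanh : Integrable (fun ω => k * tanh (α ω)) P :=
    ((integrable_const (1 : ℝ)).mono' (Real.continuous_tanh.comp_aestronglyMeasurable hα)
      (ae_of_all _ fun ω => (abs_tanh_lt_one (α ω)).le)).const_mul k
  unfold X
  rw [integral_add (f := fun ω => ξ ω + k * tanh (α ω)) (hξ.add htanh) hZ,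
    integral_add hξ htanh, integral_const_mul]

lemma abs_mean_sub_integral_le_of_isMFE {k c : ℝ} (hk : 0 ≤ k) {ξ Z α : Ω → ℝ} {m : Measure ℝ}
    (hξ : Measurable ξ) (hξ2 : MemLp ξ 2 P) (hZ2 : MemLp Z 2 P) (hZmean : ∫ ω, Z ω ∂P = 0)
    (h : IsMFE P k c ξ Z α m) : |mean m - ∫ ω, ξ ω ∂P| ≤ k := by
  obtain ⟨⟨hαξ, -⟩, -, hmap⟩ := h
  have hα : Measurable α := hαξ.mono hξ.comap_le le_rfl
  have hX : AEMeasurable (X k ξ Z α) P :=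
    ((hξ.add ((Real.continuous_tanh.measurable.comp hα).const_mul k)).aemeasurable).add
      hZ2.aestronglyMeasurable.aemeasurable
  have hmean : mean m = (∫ ω, ξ ω ∂P) + k * ∫ ω, tanh (α ω) ∂P := by
    rw [← hmap, mean, integral_map (f := fun x => x) hX aestronglyMeasurable_id,
      integral_X (hξ2.integrable one_le_two) (hZ2.integrable one_le_two) hα.aestronglyMeasurable,
      hZmean, add_zero]
  rw [hmean, add_sub_cancel_left, abs_mul, abs_of_nonneg hk]
  exact mul_le_of_le_one_right hk (abs_integral_tanh_le_one α)

lemma integral_add_const_sq {W : Ω → ℝ} (hW : MemLp W 2 P) (t : ℝ) :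
    ∫ ω, (W ω + t) ^ 2 ∂P = Var[W; P] + ((∫ ω, W ω ∂P) + t) ^ 2 := by
  have hWt : MemLp (fun ω => W ω + t) 2 P := hW.add (memLp_const t)
  rw [← variance_add_const hW.aestronglyMeasurable t, variance_eq_sub hWt,
    integral_add (hW.integrable one_le_two) (integrable_const t)]
  simp

end Expectation

lemma abs_proj_sub_le {μ k : ℝ} (hk : 0 ≤ k) (x : ℝ) : |proj μ k x - μ| ≤ k := by
  rw [abs_le, proj]
  constructor
  · linarith [le_max_left (μ - k) (min (μ + k) x)]
  · linarith [max_le (by linarith : μ - k ≤ μ + k) (min_le_left (μ + k) x)]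

def tanhCost (C b κ a : ℝ) : ℝ := C + (b + tanh a) ^ 2 + κ * a ^ 2

section TanhCost

variable (C b κ : ℝ)

lemma hasDerivAt_tanhCost (a : ℝ) :
    HasDerivAt (tanhCost C b κ) (2 * (b + tanh a) * (1 - tanh a ^ 2) + 2 * κ * a) a := by
  have h := ((((hasDerivAt_tanh a).const_add b).pow 2).const_add C).add
    ((hasDerivAt_pow 2 a).const_mul κ)
  exact h.congr_deriv (by push_cast; ring)

lemma iteratedDeriv_two_tanhCost (a : ℝ) :
    iteratedDeriv 2 (tanhCost C b κ) a =
      2 * (1 - tanh a ^ 2) * (1 - 3 * tanh a ^ 2 - 2 * b * tanh a) + 2 * κ := by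
  have hderiv : deriv (tanhCost C b κ) =
      fun a => 2 * (b + tanh a) * (1 - tanh a ^ 2) + 2 * κ * a :=
    funext fun a => (hasDerivAt_tanhCost C b κ a).deriv
  have h := ((((hasDerivAt_tanh a).const_add b).const_mul 2).mul
    (((hasDerivAt_tanh a).pow 2).const_sub 1)).add ((hasDerivAt_id a).const_mul (2 * κ))
  rw [iteratedDeriv_succ, iteratedDeriv_one, hderiv]
  exact h.deriv.trans (by simp only [Pi.pow_apply]; push_cast; ring)

lemma sub_le_iteratedDeriv_two_tanhCost (a : ℝ) :
    2 * κ - 2 * |b| - 2 ≤ iteratedDeriv 2 (tanhCost C b κ) a := by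
  rw [iteratedDeriv_two_tanhCost]
  set t := tanh a
  have ht : t ^ 2 ≤ 1 := (tanh_sq_lt_one a).le
  have hodd : |2 * t * (1 - t ^ 2)| ≤ 1 := by
    rw [← sq_le_one_iff_abs_le_one]
    nlinarith [sq_nonneg (t ^ 2 - 1 / 3), sq_nonneg t, mul_nonneg (sq_nonneg t) (sub_nonneg.2 ht)]
  have heven : -1 / 3 ≤ (1 - t ^ 2) * (1 - 3 * t ^ 2) := by nlinarith [sq_nonneg (t ^ 2 - 2 / 3)]
  have hb : b * (2 * t * (1 - t ^ 2)) ≤ |b| :=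
    (le_abs_self _).trans (by rw [abs_mul]; exact mul_le_of_le_one_right (abs_nonneg b) hodd)
  linarith

lemma continuous_tanhCost : Continuous (tanhCost C b κ) := by
  unfold tanhCost
  fun_prop

lemma strictConvexOn_tanhCost (h : |b| + 1 < κ) : StrictConvexOn ℝ Set.univ (tanhCost C b κ) :=
  strictConvexOn_univ_of_deriv2_pos (continuous_tanhCost C b κ) fun a => by
    rw [← iteratedDeriv_eq_iterate]
    linarith [sub_le_iteratedDeriv_two_tanhCost C b κ a]

lemma tendsto_tanhCost_cocompact (hκ : 0 < κ) : Tendsto (tanhCost C b κ) (cocompact ℝ) atTop := by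
  have hsq : Tendsto (fun a : ℝ => C + κ * a ^ 2) (cocompact ℝ) atTop := by
    refine tendsto_atTop_add_const_left _ C (Tendsto.const_mul_atTop hκ ?_)
    simpa [Function.comp_def] using
      (tendsto_pow_atTop two_ne_zero).comp (tendsto_norm_cocompact_atTop (E := ℝ))
  exact tendsto_atTop_mono (fun a => by unfold tanhCost; nlinarith [sq_nonneg (b + tanh a)]) hsq

end TanhCost

end Sigmoid1

open Sigmoid1 in
theorem bounded_drift_single_period_general
    {Ω : Type*} [MeasurableSpace Ω] (P : Measure Ω) [IsProbabilityMeasure P]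
    (k c : ℝ) (hk : 0 < k)
    (ξ Z : Ω → ℝ) (hξ : Measurable ξ)
    (hξ2 : MemLp ξ 2 P) (hZ2 : MemLp Z 2 P) (hZmean : (∫ ω, Z ω ∂P) = 0) :
    -- (1) any mean field equilibrium satisfies `|m̄ − E[ξ]| ≤ k`
    (∀ (α : Ω → ℝ) (m : Measure ℝ), Sigmoid1.IsMFE P k c ξ Z α m →
      |Sigmoid1.mean m - ∫ ω, ξ ω ∂P| ≤ k) ∧
    -- (2) the convexity estimate for the truncated cost
    (∀ m : Measure ℝ,
      let mbark := Sigmoid1.proj (∫ ω, ξ ω ∂P) k (Sigmoid1.mean m)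
      let φ : ℝ → ℝ := fun a => (∫ ω, (ξ ω + Real.tanh a + Z ω - mbark) ^ 2 ∂P) + (c / k) * a ^ 2
      (∀ a : ℝ, 2 * c / k - 2 * |mbark - ∫ ω, ξ ω ∂P| - 2 ≤ iteratedDeriv 2 φ a) ∧
      (c > k ^ 2 + k →
        StrictConvexOn ℝ Set.univ φ ∧ ∃! a : ℝ, ∀ a' : ℝ, φ a ≤ φ a')) := by
  refine ⟨fun α m h => abs_mean_sub_integral_le_of_isMFE hk.le hξ hξ2 hZ2 hZmean h, fun m => ?_⟩
  intro mbark φ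
  set b := (∫ ω, ξ ω ∂P) - mbark
  have hW : MemLp (fun ω => ξ ω + Z ω - mbark) 2 P := (hξ2.add hZ2).sub (memLp_const mbark)
  have hmeanW : ∫ ω, (ξ ω + Z ω - mbark) ∂P = b := by
    rw [integral_sub (f := fun ω => ξ ω + Z ω) ((hξ2.add hZ2).integrable one_le_two)
      (integrable_const mbark), integral_add (hξ2.integrable one_le_two)
      (hZ2.integrable one_le_two), hZmean]
    simp [b]
  set V := Var[fun ω => ξ ω + Z ω - mbark; P]
  have hφ : φ = tanhCost V b (c / k) := funext fun a => by
    rw [tanhCost, ← hmeanW, ← integral_add_const_sq hW]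
    simp only [φ]
    congr 2
    ext ω
    ring
  have hb : |b| ≤ k := abs_sub_comm mbark _ ▸ abs_proj_sub_le hk.le (mean m)
  rw [show |mbark - ∫ ω, ξ ω ∂P| = |b| from abs_sub_comm _ _, hφ, mul_div_assoc]
  refine ⟨sub_le_iteratedDeriv_two_tanhCost _ b _, fun hck => ?_⟩
  have hκ : |b| + 1 < c / k := by
    rw [lt_div_iff₀ hk]
    nlinarith
  have hconvex := strictConvexOn_tanhCost V b _ hκ
  exact ⟨hconvex, hconvex.existsUnique_forall_le (continuous_tanhCost V b _)
    (tendsto_tanhCost_cocompact V b _ (by linarith [abs_nonneg b]))⟩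

/-- Section 2.3.2, bounded drift. For the single-period game with dynamics
`X^α = ξ + k tanh(α) + Z` and quadratic costs: (1) every MFE `(α,m)` satisfies
`|m̄ − E[ξ]| ≤ k`; (2) the truncated one-dimensional cost
`φ(a) = E[|ξ + tanh(a) + Z − m̄_k|²] + (c/k) a²` has second derivative bounded below by
`2c/k − 2|m̄_k − E[ξ]| − 2`; consequently if `c > k² + k` then `φ` is strictly convex with a
unique minimizer. -/
theorem bounded_drift_single_period
    {Ω : Type*} [MeasurableSpace Ω] (P : Measure Ω) [IsProbabilityMeasure P]
    (k c : ℝ) (hk : 0 < k) (hc : 0 < c)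
    (ξ Z : Ω → ℝ) (hξ : Measurable ξ) (hZ : Measurable Z) (hindep : IndepFun ξ Z P)
    (hξ2 : MemLp ξ 2 P) (hZ2 : MemLp Z 2 P) (hZmean : (∫ ω, Z ω ∂P) = 0) :
    -- (1) any mean field equilibrium satisfies `|m̄ − E[ξ]| ≤ k`
    (∀ (α : Ω → ℝ) (m : Measure ℝ), Sigmoid1.IsMFE P k c ξ Z α m →
      |Sigmoid1.mean m - ∫ ω, ξ ω ∂P| ≤ k) ∧
    -- (2) the convexity estimate for the truncated cost
    (∀ m : Measure ℝ,
      let mbark := Sigmoid1.proj (∫ ω, ξ ω ∂P) k (Sigmoid1.mean m)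
      let φ : ℝ → ℝ := fun a => (∫ ω, (ξ ω + Real.tanh a + Z ω - mbark) ^ 2 ∂P) + (c / k) * a ^ 2
      (∀ a : ℝ, 2 * c / k - 2 * |mbark - ∫ ω, ξ ω ∂P| - 2 ≤ iteratedDeriv 2 φ a) ∧
      (c > k ^ 2 + k →
        StrictConvexOn ℝ Set.univ φ ∧ ∃! a : ℝ, ∀ a' : ℝ, φ a ≤ φ a')) :=
  bounded_drift_single_period_general P k c hk ξ Z hξ hξ2 hZ2 hZmean
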